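/- Let ν ≥ 3 be an odd integer, c₀,…,c_{ν−1} ∈ ℝ, c_ν < 0, F(v) = Σ_{j=0}^{ν} c_j v^j, and let μ > ν be an even integer. Fix c ∈ (0,1/8] and K > 0, and for an integer n ≥ 2 set h = c(2n)^{−2}. Let O : Λ_n × Π_n → ℝ be an arbitrary function, let ψ^n : Π_n → ℝ satisfy ‖ψ^n‖_{L^μ(Π_n)} ≤ K, and define v^n : Λ_n × Π_n → ℝ by v^n_0 = ψ^n and v^n_{t+h}(x) = v^n_t(x) + h Δ_n v^n_t(x) + h F(O_t(x) + v^n_t(x)) for t ∈ Λ_n, x ∈ Π_n. Set R^n = 1 + max_{t∈Λ_n∩[0,1]} ‖O_t‖_{L^∞(Π_n)} and A^n_t = max_{s∈Λ_n∩[0,t]} ‖v^n_s‖_{L^μ(Π_n)}. Then there exists a constant N, depending only on c, c₀,…,c_ν, ν, μ, K, such that for every integer n ≥ 2 and every O satisfying (R^n)^{ν(ν+μ)} ≤ n^{2−2(ν−1)/μ}, one has A^n_1 ≤ N (R^n)^{(ν+μ−1)/μ}. -/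

import Mathlib

/-!
With `τ = h/(1-2c)` the scheme is the convex combination
`v_{m+1}(x) = (1-2c)(v_m(x) + τ F(O_m(x) + v_m(x))) + c v_m(x+1) + c v_m(x-1)`.
Since `F` has odd degree and negative leading coefficient, the reaction step `y ↦ y + τ F(o + y)`
does not increase `|y|` once `|y| ≥ |o| + z₀` (as long as `τ |F| ≤ 1`); for smaller `|y|` it raises
`y^μ` by at most `τ μ ((z₀+1)R)^{μ-1} C ((z₀+2)R)^ν`, where `C = ∑ |c_j|`. Convexity of `y ↦ y^μ`
therefore preserves the sup bound `L = (z₀+1)R + (2n)^{1/μ}K` of `v_0` and raises the mean of `v^μ`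
by `O(h R^{μ+ν-1})` per step, so that after `⌊1/h⌋` steps `A_1^μ ≲ K^μ + R^{μ+ν-1}`.
The growth condition on `R` is what makes `τ C (1 + R + L)^ν ≤ 1` for all large `n`; on the
finitely many remaining grids `R ≤ n²` and there are boundedly many steps, so a crude iterated
sup bound suffices.
-/

open Finset
open scoped BigOperators Real

noncomputable section

/-- The discrete Laplacian `Δₙ f(x) = (2n)²(f(x+1/(2n)) - 2f(x) + f(x-1/(2n)))` on the grid
`Πₙ`, grid points being indexed by `ZMod (2n)`. -/
def dLap (n : ℕ) (f : ZMod (2*n) → ℝ) (x : ZMod (2*n)) : ℝ :=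
  (2*(n:ℝ))^2 * (f (x + 1) - 2 * f x + f (x - 1))

def polyF (ν : ℕ) (c : ℕ → ℝ) (y : ℝ) : ℝ := ∑ j ∈ Finset.range (ν+1), c j * y^j

def finMax (M : ℕ) (g : ℕ → ℝ) : ℝ :=
  (Finset.range (M+1)).sup' Finset.nonempty_range_add_one g

/-- The discrete `L^μ(Πₙ)` norm of a real grid function, `μ` a positive integer. -/
def gridLmu (n : ℕ) (μ : ℕ) (f : ZMod (2*n) → ℝ) : ℝ :=
  ((2*(n:ℝ))⁻¹ * ∑ k ∈ Finset.range (2*n), |f (k : ZMod (2*n))|^μ) ^ ((μ:ℝ)⁻¹)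

/-- The discrete `L^∞(Πₙ)` norm of a real grid function (for `n ≥ 1`). -/
def gridLinf (n : ℕ) (f : ZMod (2*n) → ℝ) : ℝ :=
  finMax (2*n - 1) (fun k => |f (k : ZMod (2*n))|)

open Filter Topology

def coeffAbsSum (ν : ℕ) (c : ℕ → ℝ) : ℝ := ∑ j ∈ range (ν + 1), |c j|

/-- The radius `z₀` beyond which the leading term of `polyF` dominates. -/
def dissipRadius (ν : ℕ) (c : ℕ → ℝ) : ℝ := coeffAbsSum ν c / -c ν

def energyRate (ν μ : ℕ) (c : ℕ → ℝ) (R : ℝ) : ℝ :=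
  μ * ((dissipRadius ν c + 1) * R) ^ (μ - 1) * (coeffAbsSum ν c * ((dissipRadius ν c + 2) * R) ^ ν)

def timeStep (n : ℕ) (cc : ℝ) : ℝ := cc / (2 * (n : ℝ)) ^ 2

def reactionTimeStep (n : ℕ) (cc : ℝ) : ℝ := timeStep n cc / (1 - 2 * cc)

def IsSchemeSolution (ν : ℕ) (c : ℕ → ℝ) (cc : ℝ) (n : ℕ) (O v : ℕ → ZMod (2 * n) → ℝ) :
    Prop :=
  ∀ m x, v (m + 1) x =
    v m x + timeStep n cc * dLap n (v m) x + timeStep n cc * polyF ν c (O m x + v m x)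

lemma finMax_le {M : ℕ} {g : ℕ → ℝ} {B : ℝ} (h : ∀ k ≤ M, g k ≤ B) : finMax M g ≤ B :=
  sup'_le _ _ fun k hk => h k (Nat.lt_succ_iff.mp (mem_range.mp hk))

lemma le_finMax {M k : ℕ} (g : ℕ → ℝ) (h : k ≤ M) : g k ≤ finMax M g :=
  le_sup' g (mem_range.mpr (Nat.lt_succ_of_le h))

lemma gridLmu_nonneg {n : ℕ} (μ : ℕ) (f : ZMod (2 * n) → ℝ) : 0 ≤ gridLmu n μ f :=
  Real.rpow_nonneg (mul_nonneg (by positivity) (sum_nonneg fun _ _ => by positivity)) _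

lemma two_mul_natCast_pos (n : ℕ) [NeZero n] : (0 : ℝ) < 2 * n := by
  have := NeZero.pos n
  positivity

lemma sum_range_natCast_eq_sum_univ {N : ℕ} [NeZero N] (g : ZMod N → ℝ) :
    ∑ k ∈ range N, g k = ∑ x : ZMod N, g x :=
  sum_nbij' (fun k => (k : ZMod N)) ZMod.val (fun _ _ => mem_univ _)
    (fun x _ => mem_range.mpr (ZMod.val_lt x))
    (fun _ hk => ZMod.val_cast_of_lt (mem_range.mp hk)) (fun x _ => ZMod.natCast_zmod_val x)
    (fun _ _ => rfl)

section Grid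

variable {n : ℕ} [NeZero n]

lemma abs_le_gridLinf (f : ZMod (2 * n) → ℝ) (x : ZMod (2 * n)) : |f x| ≤ gridLinf n f := by
  have hx : x.val ≤ 2 * n - 1 := Nat.le_sub_one_of_lt (ZMod.val_lt x)
  simpa only [gridLinf, ZMod.natCast_zmod_val] using le_finMax (fun k => |f (k : ZMod (2 * n))|) hx

lemma gridLmu_eq (μ : ℕ) (f : ZMod (2 * n) → ℝ) :
    gridLmu n μ f = ((2 * n : ℝ)⁻¹ * ∑ x, |f x| ^ μ) ^ (μ⁻¹ : ℝ) := by
  rw [gridLmu, sum_range_natCast_eq_sum_univ (fun x => |f x| ^ μ)]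

lemma gridLmu_le_iff {μ : ℕ} (hμ : μ ≠ 0) {f : ZMod (2 * n) → ℝ} {B : ℝ} (hB : 0 ≤ B) :
    gridLmu n μ f ≤ B ↔ ∑ x, |f x| ^ μ ≤ 2 * n * B ^ μ := by
  have h2n := two_mul_natCast_pos n
  rw [gridLmu_eq, Real.rpow_inv_le_iff_of_pos (by positivity) hB (by positivity),
    Real.rpow_natCast, inv_mul_le_iff₀ h2n]

lemma abs_le_of_gridLmu_le {μ : ℕ} (hμ : μ ≠ 0) {f : ZMod (2 * n) → ℝ} {K : ℝ}
    (hf : gridLmu n μ f ≤ K) (x : ZMod (2 * n)) : |f x| ≤ (2 * n : ℝ) ^ (μ⁻¹ : ℝ) * K := by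
  have hK : 0 ≤ K := (gridLmu_nonneg μ f).trans hf
  refine le_of_pow_le_pow_left₀ hμ (by positivity) ?_
  rw [mul_pow, Real.rpow_inv_natCast_pow (two_mul_natCast_pos n).le hμ]
  exact (single_le_sum (fun y _ => by positivity) (mem_univ x)).trans ((gridLmu_le_iff hμ hK).1 hf)

lemma gridLmu_le_of_abs_le {μ : ℕ} (hμ : μ ≠ 0) {f : ZMod (2 * n) → ℝ} {B : ℝ}
    (hB : 0 ≤ B) (hf : ∀ x, |f x| ≤ B) : gridLmu n μ f ≤ B := by
  rw [gridLmu_le_iff hμ hB]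
  calc ∑ x, |f x| ^ μ ≤ ∑ _x : ZMod (2 * n), B ^ μ :=
        sum_le_sum fun x _ => pow_le_pow_left₀ (abs_nonneg _) (hf x) μ
    _ = 2 * n * B ^ μ := by simp

lemma abs_le_finMax_gridLinf (O : ℕ → ZMod (2 * n) → ℝ) {m M : ℕ} (hm : m ≤ M)
    (x : ZMod (2 * n)) : |O m x| ≤ finMax M fun s => gridLinf n (O s) :=
  (abs_le_gridLinf (O m) x).trans (le_finMax (fun s => gridLinf n (O s)) hm)

end Grid

section Polynomial

variable {ν : ℕ} {c : ℕ → ℝ}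

lemma coeffAbsSum_nonneg : 0 ≤ coeffAbsSum ν c :=
  sum_nonneg fun _ _ => abs_nonneg _

lemma one_le_dissipRadius (hcν : c ν < 0) : 1 ≤ dissipRadius ν c := by
  rw [dissipRadius, le_div_iff₀ (neg_pos.2 hcν), one_mul, ← abs_of_neg hcν]
  exact single_le_sum (f := fun j => |c j|) (fun _ _ => abs_nonneg _) (self_mem_range_succ ν)

lemma abs_polyF_le (z : ℝ) : |polyF ν c z| ≤ coeffAbsSum ν c * (1 + |z|) ^ ν := by
  rw [coeffAbsSum, sum_mul]
  refine (abs_sum_le_sum_abs _ _).trans (sum_le_sum fun j hj => ?_)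
  rw [abs_mul, abs_pow]
  gcongr
  calc |z| ^ j ≤ (1 + |z|) ^ j := by gcongr; exact le_add_of_nonneg_left zero_le_one
    _ ≤ (1 + |z|) ^ ν :=
      pow_le_pow_right₀ (le_add_of_nonneg_right (abs_nonneg z))
        (Nat.lt_succ_iff.mp (mem_range.mp hj))

lemma mul_polyF_nonpos (hν : Odd ν) (hcν : c ν < 0) {z : ℝ} (hz : dissipRadius ν c ≤ |z|) :
    z * polyF ν c z ≤ 0 := by
  have hz1 : 1 ≤ |z| := (one_le_dissipRadius hcν).trans hz
  have hlead : coeffAbsSum ν c ≤ -c ν * |z| := (div_le_iff₀' (neg_pos.2 hcν)).1 hz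
  have htail : ∑ j ∈ range ν, c j * z ^ (j + 1) ≤ coeffAbsSum ν c * |z| ^ ν :=
    calc ∑ j ∈ range ν, c j * z ^ (j + 1)
        ≤ ∑ j ∈ range ν, |c j| * |z| ^ ν := sum_le_sum fun j hj =>
          (le_abs_self _).trans (by rw [abs_mul, abs_pow]; gcongr; exact mem_range.mp hj)
      _ ≤ ∑ j ∈ range (ν + 1), |c j| * |z| ^ ν :=
          sum_le_sum_of_subset_of_nonneg (range_subset_range.2 ν.le_succ)
            fun _ _ _ => by positivity
      _ = coeffAbsSum ν c * |z| ^ ν := by rw [coeffAbsSum, sum_mul]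
  have hsplit : z * polyF ν c z = c ν * (|z| * |z| ^ ν) + ∑ j ∈ range ν, c j * z ^ (j + 1) := by
    rw [← pow_succ', hν.add_one.pow_abs, polyF, sum_range_succ, mul_add, mul_sum]
    simp only [pow_succ]
    ring_nf
  rw [hsplit]
  nlinarith [mul_le_mul_of_nonneg_right hlead (pow_nonneg (abs_nonneg z) ν)]

lemma mul_abs_polyF_le_one {τ R L o y : ℝ} (hτ : 0 ≤ τ) (ho : |o| ≤ R - 1) (hy : |y| ≤ L)
    (hsmall : τ * (coeffAbsSum ν c * (1 + R + L) ^ ν) ≤ 1) :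
    τ * |polyF ν c (o + y)| ≤ 1 := by
  refine (mul_le_mul_of_nonneg_left ((abs_polyF_le _).trans ?_) hτ).trans hsmall
  have := abs_add_le o y
  exact mul_le_mul_of_nonneg_left (pow_le_pow_left₀ (by positivity) (by linarith) ν)
    coeffAbsSum_nonneg

end Polynomial

lemma abs_add_le_abs_of_mul_nonpos {y t : ℝ} (hyt : y * t ≤ 0) (ht : |t| ≤ 2 * |y|) :
    |y + t| ≤ |y| := by
  refine abs_le_of_sq_le_sq ?_ (abs_nonneg y)
  have hyt' : |y| * |t| = -(y * t) := by rw [← abs_mul, abs_of_nonpos hyt]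
  nlinarith [sq_abs y, sq_abs t, mul_le_mul_of_nonneg_left ht (abs_nonneg t)]

section Reaction

variable {ν μ : ℕ} {c : ℕ → ℝ} {τ R o y : ℝ}

lemma abs_reaction_le_of_dissipRadius_le (hν : Odd ν) (hcν : c ν < 0) (hτ : 0 ≤ τ)
    (hy : |o| + dissipRadius ν c ≤ |y|) (hb : τ * |polyF ν c (o + y)| ≤ 1) :
    |y + τ * polyF ν c (o + y)| ≤ |y| := by
  have hz₀ := one_le_dissipRadius hcν
  have hyo : |y| ≤ |o + y| + |o| := by simpa using abs_sub (o + y) o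
  have hwF := mul_polyF_nonpos hν hcν (by linarith : dissipRadius ν c ≤ |o + y|)
  -- `y` and `o + y` have the same sign, hence so do `y` and `-polyF ν c (o + y)`
  have hyw : 0 < y * (o + y) := by
    nlinarith [abs_mul_abs_self y, neg_abs_le (y * o), abs_mul y o, abs_nonneg o]
  have hyF : y * polyF ν c (o + y) ≤ 0 := by
    by_contra! h
    nlinarith [mul_pos h hyw, mul_nonpos_of_nonneg_of_nonpos (sq_nonneg y) hwF]
  refine abs_add_le_abs_of_mul_nonpos ?_ ?_
  · rw [mul_left_comm]
    exact mul_nonpos_of_nonneg_of_nonpos hτ hyF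
  · rw [abs_mul, abs_of_nonneg hτ]
    linarith [abs_nonneg o]

lemma abs_reaction_le_add (hτ : 0 ≤ τ) :
    |y + τ * polyF ν c (o + y)| ≤ |y| + τ * |polyF ν c (o + y)| := by
  simpa only [abs_mul, abs_of_nonneg hτ] using abs_add_le y (τ * polyF ν c (o + y))

lemma abs_reaction_le (hν : Odd ν) (hcν : c ν < 0) (hτ : 0 ≤ τ) (hR : 1 ≤ R)
    (ho : |o| ≤ R - 1) (hb : τ * |polyF ν c (o + y)| ≤ 1) :
    |y + τ * polyF ν c (o + y)| ≤ max |y| ((dissipRadius ν c + 1) * R) := by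
  have hz₀ := one_le_dissipRadius hcν
  rcases le_or_gt (|o| + dissipRadius ν c) |y| with hout | hin
  · exact (abs_reaction_le_of_dissipRadius_le hν hcν hτ hout hb).trans (le_max_left _ _)
  · refine (abs_reaction_le_add hτ).trans (le_max_of_le_right ?_)
    nlinarith

lemma energyRate_nonneg (hcν : c ν < 0) (hR : 0 ≤ R) : 0 ≤ energyRate ν μ c R := by
  have := one_le_dissipRadius hcν
  have := coeffAbsSum_nonneg (ν := ν) (c := c)
  unfold energyRate
  positivity

lemma reaction_pow_le (hν : Odd ν) (hcν : c ν < 0) (hμ : Even μ) (hτ : 0 ≤ τ) (hR : 1 ≤ R)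
    (ho : |o| ≤ R - 1) (hb : τ * |polyF ν c (o + y)| ≤ 1) :
    (y + τ * polyF ν c (o + y)) ^ μ ≤ y ^ μ + τ * energyRate ν μ c R := by
  have hz₀ := one_le_dissipRadius hcν
  have hC := coeffAbsSum_nonneg (ν := ν) (c := c)
  rcases le_or_gt (|o| + dissipRadius ν c) |y| with hout | hin
  · have hφ := abs_reaction_le_of_dissipRadius_le hν hcν hτ hout hb
    calc (y + τ * polyF ν c (o + y)) ^ μ = |y + τ * polyF ν c (o + y)| ^ μ := (hμ.pow_abs _).symm
      _ ≤ |y| ^ μ := pow_le_pow_left₀ (abs_nonneg _) hφ μ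
      _ = y ^ μ := hμ.pow_abs y
      _ ≤ y ^ μ + τ * energyRate ν μ c R :=
          le_add_of_nonneg_right (mul_nonneg hτ (energyRate_nonneg hcν (by linarith)))
  · have hmax : max |y + τ * polyF ν c (o + y)| |y| ≤ (dissipRadius ν c + 1) * R :=
      max_le ((abs_reaction_le_add hτ).trans (by nlinarith)) (by nlinarith)
    have hF : |polyF ν c (o + y)| ≤ coeffAbsSum ν c * ((dissipRadius ν c + 2) * R) ^ ν :=
      (abs_polyF_le _).trans (by gcongr; nlinarith [abs_add_le o y])
    have hdiff := abs_pow_sub_pow_le (y + τ * polyF ν c (o + y)) y μ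
    rw [add_sub_cancel_left, abs_mul, abs_of_nonneg hτ] at hdiff
    calc (y + τ * polyF ν c (o + y)) ^ μ
        ≤ y ^ μ + τ * |polyF ν c (o + y)| * μ * max |y + τ * polyF ν c (o + y)| |y| ^ (μ - 1) := by
          linarith [le_abs_self ((y + τ * polyF ν c (o + y)) ^ μ - y ^ μ)]
      _ ≤ y ^ μ + τ * (coeffAbsSum ν c * ((dissipRadius ν c + 2) * R) ^ ν) * μ *
            ((dissipRadius ν c + 1) * R) ^ (μ - 1) := by gcongr
      _ = y ^ μ + τ * energyRate ν μ c R := by rw [energyRate]; ring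

lemma energyRate_eq (hμ : μ ≠ 0) :
    energyRate ν μ c R = energyRate ν μ c 1 * R ^ (μ + ν - 1) := by
  simp only [energyRate, mul_one, mul_pow]
  rw [show μ + ν - 1 = (μ - 1) + ν by omega, pow_add]
  ring

end Reaction

section Averaging

variable {θ : ℝ}

lemma abs_convexComb_le (hθ : 0 ≤ θ) (hθ' : 2 * θ ≤ 1) (a b d : ℝ) :
    |(1 - 2 * θ) * a + θ * b + θ * d| ≤ (1 - 2 * θ) * |a| + θ * |b| + θ * |d| := by
  have h := sub_nonneg.2 hθ'
  calc |(1 - 2 * θ) * a + θ * b + θ * d| ≤ |(1 - 2 * θ) * a| + |θ * b| + |θ * d| :=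
        abs_add_three _ _ _
    _ = (1 - 2 * θ) * |a| + θ * |b| + θ * |d| := by
        rw [abs_mul, abs_mul, abs_mul, abs_of_nonneg h, abs_of_nonneg hθ]

lemma convexComb_pow_le {μ : ℕ} (hμ : Even μ) (hθ : 0 ≤ θ) (hθ' : 2 * θ ≤ 1) (a b d : ℝ) :
    ((1 - 2 * θ) * a + θ * b + θ * d) ^ μ ≤ (1 - 2 * θ) * a ^ μ + θ * b ^ μ + θ * d ^ μ := by
  have h := hμ.convexOn_pow.map_sum_le (t := univ) (w := ![1 - 2 * θ, θ, θ]) (p := ![a, b, d])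
    (fun i _ => by fin_cases i <;> simp <;> linarith) (by simp [Fin.sum_univ_three]; ring)
    (fun _ _ => Set.mem_univ _)
  simpa [Fin.sum_univ_three] using h

variable {G : Type*} [AddCommGroup G] [Fintype G]

lemma sum_convexComb_pow_le {μ : ℕ} (hμ : Even μ) (hθ : 0 ≤ θ) (hθ' : 2 * θ ≤ 1)
    (g f : G → ℝ) (e : G) :
    ∑ x, ((1 - 2 * θ) * g x + θ * f (x + e) + θ * f (x - e)) ^ μ ≤
      (1 - 2 * θ) * ∑ x, g x ^ μ + 2 * θ * ∑ x, f x ^ μ := by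
  have hadd : ∑ x, f (x + e) ^ μ = ∑ x, f x ^ μ := Equiv.sum_comp (Equiv.addRight e) (f · ^ μ)
  have hsub : ∑ x, f (x - e) ^ μ = ∑ x, f x ^ μ := Equiv.sum_comp (Equiv.subRight e) (f · ^ μ)
  calc _ ≤ ∑ x, ((1 - 2 * θ) * g x ^ μ + θ * f (x + e) ^ μ + θ * f (x - e) ^ μ) :=
        sum_le_sum fun x _ => convexComb_pow_le hμ hθ hθ' _ _ _
    _ = _ := by
        rw [sum_add_distrib, sum_add_distrib, ← mul_sum, ← mul_sum, ← mul_sum, hadd, hsub]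
        ring

end Averaging

lemma mul_rpow_div_pow {A R : ℝ} {ν μ : ℕ} (hA : 0 ≤ A) (hR : 0 ≤ R) (hμ : μ ≠ 0) :
    (A ^ (μ⁻¹ : ℝ) * R ^ (((ν : ℝ) + μ - 1) / μ)) ^ μ = A * R ^ (μ + ν - 1) := by
  have hμ' : (μ : ℝ) ≠ 0 := Nat.cast_ne_zero.2 hμ
  rw [mul_pow, Real.rpow_inv_natCast_pow hA hμ, ← Real.rpow_natCast (R ^ _), ← Real.rpow_mul hR,
    div_mul_cancel₀ _ hμ', ← Real.rpow_natCast, Nat.cast_sub (by omega)]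
  push_cast
  ring_nf

lemma rpow_inv_mul_pow_le {x : ℝ} {ν μ : ℕ} (hx : 1 ≤ x) (hμ : ν < μ) {K : ℝ} (hK : 0 ≤ K) :
    (x ^ (μ⁻¹ : ℝ) * K) ^ ν ≤ x * K ^ ν := by
  rw [mul_pow, ← Real.rpow_natCast (x ^ _), ← Real.rpow_mul (by linarith)]
  gcongr
  calc x ^ ((μ : ℝ)⁻¹ * ν) ≤ x ^ (1 : ℝ) := by
        refine Real.rpow_le_rpow_of_exponent_le hx ?_
        rw [inv_mul_le_iff₀ (by exact_mod_cast (Nat.zero_le ν).trans_lt hμ), mul_one]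
        exact_mod_cast hμ.le
    _ = x := Real.rpow_one x

lemma le_sq_of_pow_le_rpow {R x ε : ℝ} {k : ℕ} (hR : 1 ≤ R) (hk : k ≠ 0) (hx : 1 ≤ x)
    (hε : 0 ≤ ε) (h : R ^ k ≤ x ^ (2 - ε)) : R ≤ x ^ 2 :=
  calc R ≤ R ^ k := le_self_pow₀ hR hk
    _ ≤ x ^ (2 - ε) := h
    _ ≤ x ^ (2 : ℝ) := Real.rpow_le_rpow_of_exponent_le hx (by linarith)
    _ = x ^ 2 := Real.rpow_two x

lemma timeStep_nonneg {n : ℕ} {cc : ℝ} (hcc : 0 ≤ cc) : 0 ≤ timeStep n cc := by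
  unfold timeStep
  positivity

lemma reactionTimeStep_nonneg {n : ℕ} {cc : ℝ} (hcc : 0 ≤ cc) (hcc' : 2 * cc < 1) :
    0 ≤ reactionTimeStep n cc :=
  div_nonneg (timeStep_nonneg hcc) (by linarith)

lemma timeStep_le_one {n : ℕ} [NeZero n] {cc : ℝ} (hcc : cc ≤ 1) : timeStep n cc ≤ 1 := by
  have : (1 : ℝ) ≤ n := by exact_mod_cast NeZero.one_le
  rw [timeStep, div_le_one (by positivity)]
  nlinarith

lemma reactionTimeStep_eq {n : ℕ} {cc : ℝ} (hn : n ≠ 0) :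
    reactionTimeStep n cc = reactionTimeStep 1 cc / (n : ℝ) ^ 2 := by
  have : (n : ℝ) ≠ 0 := Nat.cast_ne_zero.2 hn
  simp only [reactionTimeStep, timeStep, Nat.cast_one]
  field_simp

lemma natFloor_mul_timeStep_le_one (n : ℕ) {cc : ℝ} (hcc : 0 ≤ cc) :
    (⌊(2 * (n : ℝ)) ^ 2 / cc⌋₊ : ℝ) * timeStep n cc ≤ 1 :=
  calc _ ≤ (2 * (n : ℝ)) ^ 2 / cc * timeStep n cc :=
        mul_le_mul_of_nonneg_right (Nat.floor_le (by positivity)) (timeStep_nonneg hcc)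
    _ ≤ 1 := by
        rw [timeStep, div_mul_div_comm, mul_comm cc]
        exact div_self_le_one _

section Scheme

variable {ν μ : ℕ} {c : ℕ → ℝ} {cc : ℝ} {n : ℕ} [NeZero n] {O v : ℕ → ZMod (2 * n) → ℝ}
  {R L : ℝ}

lemma timeStep_mul_dLap (f : ZMod (2 * n) → ℝ) (x : ZMod (2 * n)) :
    timeStep n cc * dLap n f x = cc * (f (x + 1) - 2 * f x + f (x - 1)) := by
  have : (n : ℝ) ≠ 0 := Nat.cast_ne_zero.2 (NeZero.ne n)
  rw [timeStep, dLap]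
  field_simp

lemma IsSchemeSolution.succ_eq (hv : IsSchemeSolution ν c cc n O v) (m : ℕ) (x : ZMod (2 * n)) :
    v (m + 1) x = (1 - 2 * cc) * v m x + cc * v m (x + 1) + cc * v m (x - 1) +
      timeStep n cc * polyF ν c (O m x + v m x) := by
  rw [hv, timeStep_mul_dLap]
  ring

lemma IsSchemeSolution.succ_eq_convexComb (hv : IsSchemeSolution ν c cc n O v) (hcc : 2 * cc < 1)
    (m : ℕ) (x : ZMod (2 * n)) :
    v (m + 1) x = (1 - 2 * cc) * (v m x + reactionTimeStep n cc * polyF ν c (O m x + v m x)) +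
      cc * v m (x + 1) + cc * v m (x - 1) := by
  have : 1 - 2 * cc ≠ 0 := by linarith
  rw [hv.succ_eq, reactionTimeStep]
  field_simp
  ring

lemma IsSchemeSolution.abs_succ_le_add (hv : IsSchemeSolution ν c cc n O v) (hcc : 0 ≤ cc)
    (hcc' : 2 * cc < 1) {m : ℕ} {q : ℝ} (hO : ∀ x, |O m x| ≤ R) (hq : ∀ x, |v m x| ≤ q)
    (x : ZMod (2 * n)) : |v (m + 1) x| ≤ q + coeffAbsSum ν c * (1 + R + q) ^ ν := by
  have h := sub_nonneg.2 hcc'.le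
  have hdiff : |(1 - 2 * cc) * v m x + cc * v m (x + 1) + cc * v m (x - 1)| ≤ q :=
    calc _ ≤ (1 - 2 * cc) * |v m x| + cc * |v m (x + 1)| + cc * |v m (x - 1)| :=
          abs_convexComb_le hcc hcc'.le _ _ _
      _ ≤ (1 - 2 * cc) * q + cc * q + cc * q := by gcongr <;> exact hq _
      _ = q := by ring
  have hF : |polyF ν c (O m x + v m x)| ≤ coeffAbsSum ν c * (1 + R + q) ^ ν :=
    (abs_polyF_le _).trans (mul_le_mul_of_nonneg_left (pow_le_pow_left₀ (by positivity)
      (by linarith [abs_add_le (O m x) (v m x), hO x, hq x]) ν) coeffAbsSum_nonneg)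
  have hτF : timeStep n cc * |polyF ν c (O m x + v m x)| ≤ |polyF ν c (O m x + v m x)| :=
    mul_le_of_le_one_left (abs_nonneg _) (timeStep_le_one (by linarith))
  rw [hv.succ_eq]
  refine (abs_add_le _ _).trans ?_
  rw [abs_mul, abs_of_nonneg (timeStep_nonneg hcc)]
  linarith

namespace IsSchemeSolution

variable (hv : IsSchemeSolution ν c cc n O v) (hν : Odd ν) (hcν : c ν < 0) (hcc : 0 ≤ cc)
  (hcc' : 2 * cc < 1) (hR : 1 ≤ R)
include hv hν hcν hcc hcc' hR

lemma abs_succ_le {m : ℕ} (hO : ∀ x, |O m x| ≤ R - 1)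
    (hb : ∀ x, reactionTimeStep n cc * |polyF ν c (O m x + v m x)| ≤ 1)
    (hvL : ∀ x, |v m x| ≤ L) (hL : (dissipRadius ν c + 1) * R ≤ L) (x : ZMod (2 * n)) :
    |v (m + 1) x| ≤ L := by
  have hφ := abs_reaction_le hν hcν (reactionTimeStep_nonneg hcc hcc') hR (hO x) (hb x)
  have h := sub_nonneg.2 hcc'.le
  rw [hv.succ_eq_convexComb hcc']
  calc _ ≤ (1 - 2 * cc) * |v m x + reactionTimeStep n cc * polyF ν c (O m x + v m x)| +
        cc * |v m (x + 1)| + cc * |v m (x - 1)| := abs_convexComb_le hcc hcc'.le _ _ _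
    _ ≤ (1 - 2 * cc) * L + cc * L + cc * L := by
        gcongr
        exacts [hφ.trans (max_le (hvL x) hL), hvL _, hvL _]
    _ = L := by ring

lemma sum_pow_succ_le (hμ : Even μ) {m : ℕ} (hO : ∀ x, |O m x| ≤ R - 1)
    (hb : ∀ x, reactionTimeStep n cc * |polyF ν c (O m x + v m x)| ≤ 1) :
    ∑ x, v (m + 1) x ^ μ ≤ ∑ x, v m x ^ μ + 2 * n * (timeStep n cc * energyRate ν μ c R) := by
  have h := sub_nonneg.2 hcc'.le
  have hne : 1 - 2 * cc ≠ 0 := by linarith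
  simp only [hv.succ_eq_convexComb hcc']
  calc _ ≤ (1 - 2 * cc) * ∑ x, (v m x + reactionTimeStep n cc * polyF ν c (O m x + v m x)) ^ μ +
        2 * cc * ∑ x, v m x ^ μ := sum_convexComb_pow_le hμ hcc hcc'.le _ _ _
    _ ≤ (1 - 2 * cc) * ∑ x, (v m x ^ μ + reactionTimeStep n cc * energyRate ν μ c R) +
        2 * cc * ∑ x, v m x ^ μ := by
        gcongr with x
        exact reaction_pow_le hν hcν hμ (reactionTimeStep_nonneg hcc hcc') hR (hO x) (hb x)
    _ = _ := by
        rw [sum_add_distrib, sum_const, card_univ, ZMod.card, nsmul_eq_mul, reactionTimeStep]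
        field_simp
        push_cast
        ring

lemma abs_le {M : ℕ} (hO : ∀ m ≤ M, ∀ x, |O m x| ≤ R - 1)
    (hL : (dissipRadius ν c + 1) * R ≤ L)
    (hsmall : reactionTimeStep n cc * (coeffAbsSum ν c * (1 + R + L) ^ ν) ≤ 1)
    (h0 : ∀ x, |v 0 x| ≤ L) : ∀ m ≤ M, ∀ x, |v m x| ≤ L := by
  intro m
  induction m with
  | zero => exact fun _ => h0
  | succ m ih =>
    intro hm
    have hvL := ih (by omega)
    exact hv.abs_succ_le hν hcν hcc hcc' hR (hO m (by omega)) (fun x =>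
      mul_abs_polyF_le_one (reactionTimeStep_nonneg hcc hcc') (hO m (by omega) x) (hvL x) hsmall)
      hvL hL

lemma sum_pow_le (hμ : Even μ) {M : ℕ} (hO : ∀ m ≤ M, ∀ x, |O m x| ≤ R - 1)
    (hsmall : reactionTimeStep n cc * (coeffAbsSum ν c * (1 + R + L) ^ ν) ≤ 1)
    (hvL : ∀ m ≤ M, ∀ x, |v m x| ≤ L) :
    ∀ m ≤ M, ∑ x, v m x ^ μ ≤
      ∑ x, v 0 x ^ μ + m * (2 * n * (timeStep n cc * energyRate ν μ c R)) := by
  intro m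
  induction m with
  | zero => simp
  | succ m ih =>
    intro hm
    have hstep := hv.sum_pow_succ_le hν hcν hcc hcc' hR hμ (hO m (by omega)) fun x =>
      mul_abs_polyF_le_one (reactionTimeStep_nonneg hcc hcc') (hO m (by omega) x)
        (hvL m (by omega) x) hsmall
    push_cast
    linarith [ih (by omega)]

lemma gridLmu_le_of_reactionTimeStep_mul_le (hμ : Even μ) (hμ0 : μ ≠ 0) {K : ℝ} {M : ℕ}
    (hψ : gridLmu n μ (v 0) ≤ K) (hO : ∀ m ≤ M, ∀ x, |O m x| ≤ R - 1)
    (hM : M * timeStep n cc ≤ 1)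
    (hsmall : reactionTimeStep n cc * (coeffAbsSum ν c *
      (1 + R + ((dissipRadius ν c + 1) * R + (2 * n : ℝ) ^ (μ⁻¹ : ℝ) * K)) ^ ν) ≤ 1)
    {m : ℕ} (hm : m ≤ M) :
    gridLmu n μ (v m) ≤
      (K ^ μ + energyRate ν μ c 1) ^ (μ⁻¹ : ℝ) * R ^ (((ν : ℝ) + μ - 1) / μ) := by
  have hK : 0 ≤ K := (gridLmu_nonneg μ _).trans hψ
  have hz₀ := one_le_dissipRadius hcν
  have hE₁ := energyRate_nonneg (μ := μ) hcν zero_le_one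
  have h2n := two_mul_natCast_pos n
  have hL : (dissipRadius ν c + 1) * R ≤
      (dissipRadius ν c + 1) * R + (2 * n : ℝ) ^ (μ⁻¹ : ℝ) * K :=
    le_add_of_nonneg_right (by positivity)
  have h0 : ∀ x, |v 0 x| ≤ (dissipRadius ν c + 1) * R + (2 * n : ℝ) ^ (μ⁻¹ : ℝ) * K :=
    fun x => (abs_le_of_gridLmu_le hμ0 hψ x).trans (le_add_of_nonneg_left (by positivity))
  have hE := hv.sum_pow_le hν hcν hcc hcc' hR hμ hO hsmall
    (hv.abs_le hν hcν hcc hcc' hR hO hL hsmall h0) m hm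
  have hE0 : ∑ x, v 0 x ^ μ ≤ 2 * n * K ^ μ := by
    simpa only [hμ.pow_abs] using (gridLmu_le_iff hμ0 hK).1 hψ
  have hmh : m * timeStep n cc ≤ 1 :=
    (mul_le_mul_of_nonneg_right (Nat.cast_le.2 hm) (timeStep_nonneg hcc)).trans hM
  have hRpow : 1 ≤ R ^ (μ + ν - 1) := one_le_pow₀ hR
  rw [gridLmu_le_iff hμ0 (by positivity), mul_rpow_div_pow (by positivity) (by linarith) hμ0]
  simp only [hμ.pow_abs]
  rw [energyRate_eq hμ0] at hE
  calc ∑ x, v m x ^ μ ≤ 2 * n * K ^ μ +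
        2 * n * (m * timeStep n cc) * (energyRate ν μ c 1 * R ^ (μ + ν - 1)) := by linarith
    _ ≤ 2 * n * K ^ μ + 2 * n * 1 * (energyRate ν μ c 1 * R ^ (μ + ν - 1)) := by gcongr
    _ ≤ 2 * n * ((K ^ μ + energyRate ν μ c 1) * R ^ (μ + ν - 1)) := by
        nlinarith [mul_le_mul_of_nonneg_left hRpow (by positivity : (0 : ℝ) ≤ 2 * n * K ^ μ)]

end IsSchemeSolution

end Scheme

lemma eventually_reactionTimeStep_mul_le_one {ν μ : ℕ} (hμ : ν < μ) {ε : ℝ} (hε : 0 < ε)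
    {cc a C K : ℝ} (hcc : 0 ≤ cc) (hcc' : 2 * cc < 1) (ha : 0 ≤ a) (hC : 0 ≤ C) (hK : 0 ≤ K) :
    ∀ᶠ n : ℕ in atTop, ∀ R : ℝ, 1 ≤ R → R ^ ν ≤ (n : ℝ) ^ (2 - ε) →
      reactionTimeStep n cc * (C * (1 + R + (a * R + (2 * n : ℝ) ^ (μ⁻¹ : ℝ) * K)) ^ ν) ≤ 1 := by
  set τ₁ := reactionTimeStep 1 cc
  have hτ₁ : 0 ≤ τ₁ := reactionTimeStep_nonneg hcc hcc'
  set f : ℝ → ℝ := fun x => τ₁ * C * 2 ^ (ν - 1) * ((a + 2) ^ ν * (x ^ ε)⁻¹ + 2 * K ^ ν * x⁻¹)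
  have hf : Tendsto f atTop (𝓝 0) := by
    have := (((tendsto_rpow_atTop hε).inv_tendsto_atTop.const_mul ((a + 2) ^ ν)).add
      (tendsto_inv_atTop_zero.const_mul (2 * K ^ ν))).const_mul (τ₁ * C * 2 ^ (ν - 1))
    simpa using this
  filter_upwards [(hf.comp tendsto_natCast_atTop_atTop).eventually_le_const zero_lt_one,
    eventually_ge_atTop 1] with n hfn hn R hR hRν
  have hn' : (1 : ℝ) ≤ n := by exact_mod_cast hn
  have hpow : (1 + R + (a * R + (2 * n : ℝ) ^ (μ⁻¹ : ℝ) * K)) ^ ν ≤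
      2 ^ (ν - 1) * ((a + 2) ^ ν * (n : ℝ) ^ (2 - ε) + 2 * n * K ^ ν) :=
    calc _ ≤ ((a + 2) * R + (2 * n : ℝ) ^ (μ⁻¹ : ℝ) * K) ^ ν :=
          pow_le_pow_left₀ (by positivity) (by nlinarith) ν
      _ ≤ 2 ^ (ν - 1) * (((a + 2) * R) ^ ν + ((2 * n : ℝ) ^ (μ⁻¹ : ℝ) * K) ^ ν) :=
          add_pow_le (by positivity) (by positivity) ν
      _ ≤ _ := by
          rw [mul_pow]
          gcongr
          exact rpow_inv_mul_pow_le (by linarith) hμ hK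
  have hn0 : (0 : ℝ) < n := by linarith
  calc _ ≤ τ₁ / (n : ℝ) ^ 2 *
        (C * (2 ^ (ν - 1) * ((a + 2) ^ ν * (n : ℝ) ^ (2 - ε) + 2 * n * K ^ ν))) := by
        rw [reactionTimeStep_eq (by omega)]
        gcongr
    _ = f n := by
        simp only [f, Real.rpow_sub hn0, Real.rpow_two]
        field_simp
    _ ≤ 1 := hfn

lemma exists_gridLmu_le {ν μ : ℕ} {c : ℕ → ℝ} {cc : ℝ} (hμ : μ ≠ 0) (hcc : 0 ≤ cc)
    (hcc' : 2 * cc < 1) (K R : ℝ) (n₁ M₁ : ℕ) :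
    ∃ B, ∀ n, 0 < n → n ≤ n₁ → ∀ O v : ℕ → ZMod (2 * n) → ℝ, IsSchemeSolution ν c cc n O v →
      gridLmu n μ (v 0) ≤ K → ∀ m ≤ M₁, (∀ k < m, ∀ x, |O k x| ≤ R) →
        gridLmu n μ (v m) ≤ B := by
  set g : ℝ → ℝ := fun q => q + coeffAbsSum ν c * (1 + R + q) ^ ν
  set q₀ := (2 * n₁ : ℝ) ^ (μ⁻¹ : ℝ) * K with hq₀
  refine ⟨finMax M₁ fun m => g^[m] q₀, fun n hn hn₁ O v hv hψ m hm hO => ?_⟩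
  have := NeZero.of_pos hn
  have hK : 0 ≤ K := (gridLmu_nonneg μ _).trans hψ
  have hbound : ∀ k ≤ m, ∀ x, |v k x| ≤ g^[k] q₀ := by
    intro k
    induction k with
    | zero =>
      intro _ x
      refine (abs_le_of_gridLmu_le hμ hψ x).trans ?_
      rw [Function.iterate_zero_apply, hq₀]
      gcongr
    | succ k ih =>
      intro hk x
      rw [Function.iterate_succ_apply']
      exact hv.abs_succ_le_add hcc hcc' (hO k (by omega)) (ih (by omega)) x
  exact (gridLmu_le_of_abs_le hμ ((abs_nonneg _).trans (hbound m le_rfl 0)) (hbound m le_rfl)).trans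
    (le_finMax (fun m => g^[m] q₀) hm)

/-- **A priori bound on the approximation (Theorem 3.4, pathwise form).**
With `F` a polynomial of odd degree `ν ≥ 3` with negative leading coefficient, `μ > ν` even,
`h = c(2n)^{-2}`, initial condition `‖ψⁿ‖_{L^μ(Πₙ)} ≤ K`, and `vⁿ` the solution of the explicit
scheme `vⁿ_{t+h} = vⁿ_t + hΔₙvⁿ_t + hF(O_t + vⁿ_t)`, there is `N = N(c,c₀,…,c_ν,ν,μ,K)` such
that for all `n ≥ 2` and all `O` with `(Rⁿ)^{ν(ν+μ)} ≤ n^{2-2(ν-1)/μ}`, one has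
`Aⁿ_1 ≤ N (Rⁿ)^{(ν+μ-1)/μ}`, where `Rⁿ = 1 + max_{s∈Λₙ∩[0,1]}‖O_s‖_{L^∞(Πₙ)}` and
`Aⁿ_1 = max_{s∈Λₙ∩[0,1]}‖vⁿ_s‖_{L^μ(Πₙ)}`. -/
theorem scheme_apriori_bound
    (ν : ℕ) (hν : 3 ≤ ν) (hνodd : Odd ν) (c : ℕ → ℝ) (hcν : c ν < 0)
    (μ : ℕ) (hμ : ν < μ) (hμeven : Even μ)
    (cc : ℝ) (hcc : 0 < cc) (hcc' : cc ≤ 1/8) (K : ℝ) (hK : 0 < K) :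
    ∃ N : ℝ, 0 < N ∧
      ∀ n : ℕ, 2 ≤ n →
      ∀ (O : ℕ → ZMod (2*n) → ℝ) (ψ : ZMod (2*n) → ℝ) (v : ℕ → ZMod (2*n) → ℝ),
        gridLmu n μ ψ ≤ K →
        v 0 = ψ →
        (∀ (m : ℕ) (x : ZMod (2*n)),
          v (m+1) x = v m x + (cc/(2*(n:ℝ))^2) * dLap n (v m) x
            + (cc/(2*(n:ℝ))^2) * polyF ν c (O m x + v m x)) →
        (1 + finMax (Nat.floor ((2*(n:ℝ))^2/cc)) (fun s => gridLinf n (O s))) ^ (ν*(ν+μ))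
            ≤ (n:ℝ) ^ ((2:ℝ) - 2*((ν:ℝ)-1)/(μ:ℝ)) →
        finMax (Nat.floor ((2*(n:ℝ))^2/cc)) (fun s => gridLmu n μ (v s))
          ≤ N * (1 + finMax (Nat.floor ((2*(n:ℝ))^2/cc)) (fun s => gridLinf n (O s)))
              ^ (((ν:ℝ)+(μ:ℝ)-1)/(μ:ℝ)) := by
  have hcc'' : 2 * cc < 1 := by linarith
  have hμ0 : μ ≠ 0 := by omega
  have hν1 : (1 : ℝ) < ν := by exact_mod_cast (by omega : 1 < ν)
  have hε : 0 < 2 * ((ν : ℝ) - 1) / μ := div_pos (by linarith) (Nat.cast_pos.2 (by omega))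
  obtain ⟨n₀, hn₀⟩ := eventually_atTop.1 <| eventually_reactionTimeStep_mul_le_one
    (a := dissipRadius ν c + 1) (C := coeffAbsSum ν c) hμ hε hcc.le hcc''
    (by linarith [one_le_dissipRadius hcν]) coeffAbsSum_nonneg hK.le
  obtain ⟨B, hB⟩ := exists_gridLmu_le (ν := ν) (c := c) hμ0 hcc.le hcc'' K ((n₀ : ℝ) ^ 2) n₀
    ⌊(2 * (n₀ : ℝ)) ^ 2 / cc⌋₊
  set N₁ := (K ^ μ + energyRate ν μ c 1) ^ (μ⁻¹ : ℝ)
  have hN₁ : 0 < N₁ := Real.rpow_pos_of_pos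
    (add_pos_of_pos_of_nonneg (pow_pos hK μ) (energyRate_nonneg hcν zero_le_one)) _
  refine ⟨max N₁ B, lt_max_of_lt_left hN₁, fun n hn O ψ v hψ hv0 hv hRn => ?_⟩
  subst hv0
  replace hv : IsSchemeSolution ν c cc n O v := hv
  have : NeZero n := ⟨by omega⟩
  set R := 1 + finMax ⌊(2 * (n : ℝ)) ^ 2 / cc⌋₊ fun s => gridLinf n (O s)
  have hR : 1 ≤ R := le_add_of_nonneg_right ((abs_nonneg _).trans (abs_le_finMax_gridLinf O
    (Nat.zero_le _) 0))
  have hO : ∀ m ≤ ⌊(2 * (n : ℝ)) ^ 2 / cc⌋₊, ∀ x, |O m x| ≤ R - 1 := fun m hm x => by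
    linarith [abs_le_finMax_gridLinf O hm x]
  have hRθ : 1 ≤ R ^ (((ν : ℝ) + μ - 1) / μ) :=
    Real.one_le_rpow hR (div_nonneg (by linarith) μ.cast_nonneg)
  refine finMax_le fun m hm => ?_
  rcases le_or_gt n₀ n with hlarge | hsmall
  · have hRν : R ^ ν ≤ (n : ℝ) ^ (2 - 2 * ((ν : ℝ) - 1) / μ) :=
      (pow_le_pow_right₀ hR (Nat.le_mul_of_pos_right ν (by omega))).trans hRn
    calc gridLmu n μ (v m) ≤ N₁ * R ^ (((ν : ℝ) + μ - 1) / μ) :=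
          hv.gridLmu_le_of_reactionTimeStep_mul_le hνodd hcν hcc.le hcc'' hR hμeven hμ0 hψ hO
            (natFloor_mul_timeStep_le_one n hcc.le) (hn₀ n hlarge R hR hRν) hm
      _ ≤ max N₁ B * R ^ (((ν : ℝ) + μ - 1) / μ) := by gcongr; exact le_max_left _ _
  · have hRn₀ : R ≤ (n₀ : ℝ) ^ 2 := (le_sq_of_pow_le_rpow hR (by positivity)
      (by exact_mod_cast (by omega : 1 ≤ n)) hε.le hRn).trans (by gcongr)
    calc gridLmu n μ (v m) ≤ B := hB n (by omega) hsmall.le O v hv hψ m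
          (hm.trans (Nat.floor_le_floor (by gcongr))) fun k hk x => by
            linarith [hO k (by omega) x]
      _ ≤ max N₁ B := le_max_right _ _
      _ ≤ max N₁ B * R ^ (((ν : ℝ) + μ - 1) / μ) :=
          le_mul_of_one_le_right (hN₁.le.trans (le_max_left _ _)) hRθ
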